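/- There exists a constant c > 0 such that for every integer m ≥ 2 and every integer t ≥ c·m²·log m, the t-step transition probabilities P^t of the lazy king random walk on the discrete torus (ZMod m) × (ZMod m) satisfy max_{i} Σ_{j} | P^t(i,j) − 1/m² | ≤ 1/m⁴, where the maximum is over all states i and the sum is over all states j of the torus. -/

import Mathlib

/-
The lazy king walk is the product of two independent lazy walks on `ZMod m`, whose Fourier
coefficients are `((1 + 2 cos (2πk/m)) / 3) ^ t`. For `k ≠ 0` these are at most
`(1 - 8 / (3 m²)) ^ t ≤ exp (-8t / (3 m²))`, so for `t ≥ 3 m² log m` each one-dimensional walk is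
within `m⁻⁷` of uniform in `ℓ¹`, and the `ℓ¹` distance of a product of laws from a product of
laws is at most the sum of the two distances.
-/

open MeasureTheory ProbabilityTheory
open scoped ENNReal

/-- The law of `t` i.i.d. increment symbols for the lazy king random walk, each uniform on the
nine possibilities. -/
noncomputable def kingStepsMeasure (t : ℕ) : Measure (Fin t → Fin 3 × Fin 3) :=
  (PMF.uniformOfFintype (Fin t → Fin 3 × Fin 3)).toMeasure

/-- The `t`-step transition probability `P^t(i,j)` of the lazy king random walk on the discrete
torus `ZMod m × ZMod m`: the probability that the walk started at `i`, whose increment in each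
coordinate encoded by the symbol `s : Fin 3` is `(s : ZMod m) - 1 ∈ {-1, 0, +1}` (each
coordinate independent and uniform, so each of the nine moves has probability `1/9`), is at `j`
after `t` steps. -/
noncomputable def kingTrans (m t : ℕ) (i j : ZMod m × ZMod m) : ℝ :=
  ((kingStepsMeasure t)
    {ω | (i.1 + ∑ s : Fin t, ((((ω s).1 : ℕ) : ZMod m) - 1),
          i.2 + ∑ s : Fin t, ((((ω s).2 : ℕ) : ZMod m) - 1)) = j}).toReal

open Finset

lemma AddChar.map_sum_eq_prod {A M ι : Type*} [AddCommMonoid A] [CommMonoid M]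
    (ψ : AddChar A M) (s : Finset ι) (f : ι → A) : ψ (∑ i ∈ s, f i) = ∏ i ∈ s, ψ (f i) := by
  induction s using Finset.cons_induction with
  | empty => simp
  | cons a s ha ih => rw [sum_cons, prod_cons, AddChar.map_add_eq_mul, ih]

lemma sum_abs_mul_sub_mul_le {α β : Type*} [Fintype α] [Fintype β] (p u : α → ℝ) (q v : β → ℝ) :
    ∑ x : α × β, |p x.1 * q x.2 - u x.1 * v x.2|
      ≤ (∑ a, |p a - u a|) * ∑ b, |q b| + (∑ a, |u a|) * ∑ b, |q b - v b| := by
  calc ∑ x : α × β, |p x.1 * q x.2 - u x.1 * v x.2|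
      ≤ ∑ x : α × β, (|p x.1 - u x.1| * |q x.2| + |u x.1| * |q x.2 - v x.2|) := by
        refine sum_le_sum fun x _ => ?_
        calc |p x.1 * q x.2 - u x.1 * v x.2|
            = |(p x.1 - u x.1) * q x.2 + u x.1 * (q x.2 - v x.2)| := by ring_nf
          _ ≤ _ := (abs_add_le _ _).trans_eq (by rw [abs_mul, abs_mul])
    _ = _ := by
        simp only [Fintype.sum_prod_type, sum_add_distrib, ← mul_sum, sum_mul]

section WalkCount

variable {S T A B : Type*} [Fintype S] [Fintype T] [AddCommMonoid A] [AddCommMonoid B]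
  [DecidableEq A] [DecidableEq B]

def walkCount (g : S → A) (t : ℕ) (r : A) : ℕ := #{f : Fin t → S | ∑ s, g (f s) = r}

noncomputable def walkProb (g : S → A) (t : ℕ) (r : A) : ℝ :=
  walkCount g t r / Fintype.card S ^ t

lemma walkProb_nonneg (g : S → A) (t : ℕ) (r : A) : 0 ≤ walkProb g t r := by
  unfold walkProb; positivity

lemma sum_walkCount [Fintype A] (g : S → A) (t : ℕ) :
    ∑ r, walkCount g t r = Fintype.card S ^ t := by
  simpa [walkCount] using (card_eq_sum_card_fiberwise (f := fun f : Fin t → S => ∑ s, g (f s))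
    (s := univ) (t := univ) fun _ _ => mem_univ _).symm

lemma sum_walkProb [Fintype A] [Nonempty S] (g : S → A) (t : ℕ) : ∑ r, walkProb g t r = 1 := by
  simp only [walkProb, ← sum_div, ← Nat.cast_sum, sum_walkCount, Nat.cast_pow]
  exact div_self (by positivity)

lemma walkCount_prodMap (g : S → A) (h : T → B) (t : ℕ) (y : A) (z : B) :
    walkCount (Prod.map g h) t (y, z) = walkCount g t y * walkCount h t z := by
  unfold walkCount
  rw [← card_product, ← filter_product]
  refine card_bij' (fun ω _ => (Prod.fst ∘ ω, Prod.snd ∘ ω)) (fun p _ s => (p.1 s, p.2 s))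
    ?_ ?_ (fun _ _ => rfl) (fun _ _ => rfl) <;> simp [Prod.ext_iff, Prod.fst_sum, Prod.snd_sum]

lemma walkProb_prodMap (g : S → A) (h : T → B) (t : ℕ) (y : A) (z : B) :
    walkProb (Prod.map g h) t (y, z) = walkProb g t y * walkProb h t z := by
  simp only [walkProb, walkCount_prodMap, Fintype.card_prod]
  push_cast
  rw [mul_pow, div_mul_div_comm]

end WalkCount

section Fourier

variable {R S : Type*} [CommRing R] [Fintype R] [DecidableEq R] [Fintype S] {ψ : AddChar R ℂ}

lemma card_mul_walkCount (hψ : ψ.IsPrimitive) (g : S → R) (t : ℕ) (r : R) :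
    (Fintype.card R : ℂ) * walkCount g t r
      = ∑ k, ψ (-(k * r)) * (∑ a, ψ (k * g a)) ^ t := by
  have hword : ∀ k, ψ (-(k * r)) * (∑ a, ψ (k * g a)) ^ t
      = ∑ f : Fin t → S, ψ (k * (∑ s, g (f s) - r)) := by
    intro k
    rw [← Fin.prod_const, prod_univ_sum, Fintype.piFinset_univ, mul_sum]
    refine sum_congr rfl fun f _ => ?_
    rw [← AddChar.map_sum_eq_prod, ← AddChar.map_add_eq_mul, mul_sub, mul_sum]
    ring_nf
  simp only [hword]
  rw [sum_comm]
  simp only [AddChar.sum_mulShift _ hψ, sub_eq_zero, Nat.cast_ite, Nat.cast_zero]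
  rw [← sum_filter, sum_const, nsmul_eq_mul, mul_comm, walkCount]

lemma abs_walkProb_sub_le [Nonempty S] (hψ : ψ.IsPrimitive) (g : S → R) (t : ℕ) (r : R) :
    |walkProb g t r - 1 / Fintype.card R|
      ≤ 1 / Fintype.card R * ∑ k ∈ univ.erase 0, (‖∑ a, ψ (k * g a)‖ / Fintype.card S) ^ t := by
  have hsplit := card_mul_walkCount hψ g t r
  -- the `k = 0` term is `card S ^ t`, the uniform part
  rw [← add_sum_erase _ _ (mem_univ 0)] at hsplit
  simp only [zero_mul, neg_zero, AddChar.map_zero_eq_one, one_mul, sum_const, card_univ,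
    nsmul_eq_mul, mul_one] at hsplit
  have key : ((walkProb g t r - 1 / Fintype.card R : ℝ) : ℂ)
      = 1 / (Fintype.card R * Fintype.card S ^ t)
        * ∑ k ∈ univ.erase 0, ψ (-(k * r)) * (∑ a, ψ (k * g a)) ^ t := by
    rw [eq_sub_of_add_eq' hsplit.symm, walkProb]
    push_cast
    field_simp
  have hnorm := congrArg norm key
  rw [Complex.norm_real, Real.norm_eq_abs] at hnorm
  rw [hnorm, norm_mul, mul_sum]
  refine (mul_le_mul_of_nonneg_left (norm_sum_le _ _) (norm_nonneg _)).trans_eq ?_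
  rw [mul_sum]
  refine sum_congr rfl fun k _ => ?_
  simp only [norm_mul, norm_pow, AddChar.norm_apply, one_mul, norm_div, norm_one,
    Complex.norm_natCast, div_pow]
  field_simp

lemma sum_abs_walkProb_sub_le [Nonempty S] (hψ : ψ.IsPrimitive) (g : S → R) (t : ℕ) :
    ∑ r, |walkProb g t r - 1 / Fintype.card R|
      ≤ ∑ k ∈ univ.erase 0, (‖∑ a, ψ (k * g a)‖ / Fintype.card S) ^ t := by
  refine (sum_le_sum fun r _ => abs_walkProb_sub_le hψ g t r).trans_eq ?_
  rw [sum_const, card_univ, nsmul_eq_mul, ← mul_assoc]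
  field_simp

end Fourier

section LazyStep

open Real

variable {m : ℕ} [NeZero m]

def lazyStep (m : ℕ) (a : Fin 3) : ZMod m := ((a : ℕ) : ZMod m) - 1

lemma sum_stdAddChar_mul_lazyStep (k : ZMod m) :
    ∑ a, ZMod.stdAddChar (k * lazyStep m a)
      = ((1 + 2 * cos (2 * π * k.valMinAbs / m) : ℝ) : ℂ) := by
  have hk : ZMod.stdAddChar k = Complex.exp ((2 * π * k.valMinAbs / m : ℂ) * Complex.I) := by
    conv_lhs => rw [← ZMod.coe_valMinAbs k]
    rw [ZMod.stdAddChar_coe]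
    ring_nf
  have hnk : ZMod.stdAddChar (-k) = Complex.exp (-(2 * π * k.valMinAbs / m : ℂ) * Complex.I) := by
    rw [AddChar.map_neg_eq_inv, hk, ← Complex.exp_neg, neg_mul]
  have h2 : ((2 : ℕ) : ZMod m) - 1 = 1 := by norm_num
  simp only [Fin.sum_univ_three, lazyStep, Fin.val_zero, Fin.val_one, Fin.val_two, Nat.cast_zero,
    Nat.cast_one, h2, zero_sub, sub_self, mul_neg, mul_zero, mul_one, AddChar.map_zero_eq_one,
    hk, hnk]
  push_cast
  rw [Complex.two_cos]
  ring

-- The representative `valMinAbs` keeps the angle in `[-π, π]`, where `cos x ≤ 1 - 2 x² / π²`.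
lemma cos_two_pi_valMinAbs_div_le {k : ZMod m} (hk : k ≠ 0) :
    cos (2 * π * k.valMinAbs / m) ≤ 1 - 8 / m ^ 2 := by
  set d : ℤ := k.valMinAbs
  have hm : (0 : ℝ) < m := by exact_mod_cast Nat.pos_of_ne_zero (NeZero.ne m)
  have hd : (1 : ℝ) ≤ (d : ℝ) ^ 2 := by
    rw [one_le_sq_iff_one_le_abs, ← Int.cast_abs]
    exact_mod_cast Int.one_le_abs ((ZMod.valMinAbs_eq_zero k).not.mpr hk)
  have hdm : 2 * |(d : ℝ)| ≤ m := by
    have := ZMod.natAbs_valMinAbs_le k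
    rw [← Int.cast_abs, ← Int.natCast_natAbs]
    exact_mod_cast (by omega : 2 * d.natAbs ≤ m)
  have hx : |2 * π * d / m| ≤ π := by
    rw [abs_div, abs_mul, abs_of_pos (by positivity : 0 < 2 * π), abs_of_pos hm, div_le_iff₀ hm]
    nlinarith [pi_pos]
  calc cos (2 * π * d / m) ≤ 1 - 2 / π ^ 2 * (2 * π * d / m) ^ 2 := cos_le_one_sub_mul_cos_sq hx
    _ = 1 - 8 * d ^ 2 / m ^ 2 := by field_simp; ring
    _ ≤ 1 - 8 / m ^ 2 := by gcongr; linarith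

lemma norm_sum_stdAddChar_mul_lazyStep_le (hm : 2 ≤ m) {k : ZMod m} (hk : k ≠ 0) :
    ‖∑ a, ZMod.stdAddChar (k * lazyStep m a)‖ / 3 ≤ 1 - 8 / (3 * m ^ 2) := by
  have hm4 : (4 : ℝ) ≤ m ^ 2 := by
    have : (2 : ℝ) ≤ m := by exact_mod_cast hm
    nlinarith
  have h8 : 8 / (m : ℝ) ^ 2 ≤ 2 := by
    rw [div_le_iff₀ (by positivity)]
    linarith
  rw [sum_stdAddChar_mul_lazyStep, Complex.norm_real, Real.norm_eq_abs,
    div_le_iff₀ (by norm_num : (0 : ℝ) < 3), abs_le]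
  have hcos := cos_two_pi_valMinAbs_div_le hk
  have h3 : (1 - 8 / (3 * (m : ℝ) ^ 2)) * 3 = 3 - 8 / m ^ 2 := by field_simp
  rw [h3]
  constructor <;> linarith [neg_one_le_cos (2 * π * k.valMinAbs / m),
    (by positivity : 0 ≤ 8 / (m : ℝ) ^ 2)]

lemma sum_abs_walkProb_lazyStep_sub_le (hm : 2 ≤ m) {t : ℕ} (ht : 3 * m ^ 2 * log m ≤ t) :
    ∑ r, |walkProb (lazyStep m) t r - 1 / m| ≤ 1 / m ^ 7 := by
  have hm0 : (0 : ℝ) < m := by exact_mod_cast Nat.pos_of_ne_zero (NeZero.ne m)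
  set β : ℝ := 1 - 8 / (3 * m ^ 2)
  have hnorm : ∀ k ∈ univ.erase (0 : ZMod m),
      (‖∑ a, ZMod.stdAddChar (k * lazyStep m a)‖ / 3) ^ t ≤ β ^ t := fun k hk =>
    pow_le_pow_left₀ (by positivity) (norm_sum_stdAddChar_mul_lazyStep_le hm (ne_of_mem_erase hk)) t
  have hβ : 0 ≤ β := by
    have : (2 : ℝ) ≤ m := by exact_mod_cast hm
    rw [sub_nonneg, div_le_one (by positivity)]
    nlinarith
  have hβt : β ^ t ≤ 1 / m ^ 8 := calc
    β ^ t ≤ exp (-(8 / (3 * m ^ 2))) ^ t := pow_le_pow_left₀ hβ (one_sub_le_exp_neg _) t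
    _ = exp (-(t * (8 / (3 * m ^ 2)))) := by rw [← exp_nat_mul]; ring_nf
    _ ≤ exp (-(8 * log m)) := by
        refine exp_le_exp.mpr (neg_le_neg ?_)
        calc 8 * log m = 3 * m ^ 2 * log m * (8 / (3 * m ^ 2)) := by field_simp
          _ ≤ t * (8 / (3 * m ^ 2)) := by gcongr
    _ = 1 / m ^ 8 := by
        rw [exp_neg, ← Nat.cast_ofNat, ← log_pow, exp_log (by positivity), one_div]
  have hsum := sum_abs_walkProb_sub_le (ZMod.isPrimitive_stdAddChar m) (lazyStep m) t
  simp only [ZMod.card, Fintype.card_fin, Nat.cast_ofNat] at hsum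
  calc _ ≤ _ := hsum
    _ ≤ ∑ k ∈ univ.erase (0 : ZMod m), β ^ t := sum_le_sum hnorm
    _ ≤ ∑ _k : ZMod m, β ^ t :=
        sum_le_sum_of_subset_of_nonneg (erase_subset _ _) fun _ _ _ => pow_nonneg hβ t
    _ = m * β ^ t := by rw [sum_const, card_univ, ZMod.card, nsmul_eq_mul]
    _ ≤ m * (1 / m ^ 8) := by gcongr
    _ = 1 / m ^ 7 := by field_simp

end LazyStep

lemma kingTrans_eq_walkProb (m t : ℕ) [NeZero m] (i j : ZMod m × ZMod m) :
    kingTrans m t i j = walkProb (Prod.map (lazyStep m) (lazyStep m)) t (j - i) := by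
  rw [kingTrans, kingStepsMeasure,
    PMF.toMeasure_uniformOfFintype_apply _ (Set.toFinite _).measurableSet, ENNReal.toReal_div]
  simp only [ENNReal.toReal_natCast, walkProb, walkCount, Fintype.card_fun, Fintype.card_prod,
    Fintype.card_fin, Fintype.card_subtype]
  push_cast
  congr 2
  refine congrArg _ (filter_congr fun ω _ => ?_)
  simp [eq_sub_iff_add_eq', Prod.ext_iff, Prod.fst_sum, Prod.snd_sum, lazyStep]

/-- There is a constant `c > 0` such that for every `m ≥ 2` and every
`t ≥ c * m² * log m`, the `t`-step transition probabilities of the lazy king random walk on the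
discrete torus `ZMod m × ZMod m` satisfy `max_i ∑_j |P^t(i,j) - 1/m²| ≤ 1/m⁴`. -/
theorem stmt_5 :
    ∃ c : ℝ, 0 < c ∧
      ∀ (m : ℕ) [NeZero m], 2 ≤ m → ∀ t : ℕ, c * m ^ 2 * Real.log m ≤ t →
        ∀ i : ZMod m × ZMod m,
          ∑ j : ZMod m × ZMod m, |kingTrans m t i j - 1 / (m : ℝ) ^ 2| ≤ 1 / (m : ℝ) ^ 4 := by
  refine ⟨3, three_pos, fun m _ hm t ht i => ?_⟩
  have hm0 : (0 : ℝ) < m := by positivity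
  have hq : ∑ r, |walkProb (lazyStep m) t r| = 1 := by
    simp only [abs_of_nonneg (walkProb_nonneg _ _ _), sum_walkProb]
  have hu : ∑ _r : ZMod m, |1 / (m : ℝ)| = 1 := by
    rw [sum_const, card_univ, ZMod.card, nsmul_eq_mul, abs_of_pos (by positivity)]
    field_simp
  have hD := sum_abs_walkProb_lazyStep_sub_le hm ht
  calc ∑ j, |kingTrans m t i j - 1 / (m : ℝ) ^ 2|
      = ∑ x : ZMod m × ZMod m,
          |walkProb (lazyStep m) t x.1 * walkProb (lazyStep m) t x.2 - 1 / m * (1 / m)| := by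
        refine Fintype.sum_equiv (Equiv.subRight i) _ _ fun j => ?_
        rw [kingTrans_eq_walkProb, Equiv.subRight_apply, walkProb_prodMap]
        ring_nf
    _ ≤ 2 * ∑ r, |walkProb (lazyStep m) t r - 1 / m| := by
        have := sum_abs_mul_sub_mul_le (walkProb (lazyStep m) t) (fun _ => 1 / (m : ℝ))
          (walkProb (lazyStep m) t) (fun _ => 1 / m)
        rw [hq, hu] at this
        linarith
    _ ≤ 2 * (1 / m ^ 7) := by gcongr
    _ ≤ 1 / m ^ 4 := by
        have : (2 : ℝ) ≤ m ^ 3 := by exact_mod_cast hm.trans (Nat.le_self_pow (by norm_num) m)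
        rw [mul_one_div, div_le_div_iff₀ (by positivity) (by positivity)]
        nlinarith [pow_pos hm0 4]
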